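/- Let U ∈ ℝ and μ ≥ 0. Let φ be a twice continuously differentiable function of (t,x,z) ∈ ℝ × ℝ × [0,∞) such that there is a compact set K ⊂ ℝ² with φ(t,·,·) supported in K for every t, and suppose φ satisfies the convected wave equation (∂_t + U∂ₓ)²φ = Δφ − μφ on ℝ × ℝ × (0,∞). Set ψ = ∂_tφ + U∂ₓφ and define the flow energy E_f(t) = ½ ∫_{ℝ×(0,∞)} ( ψ(t,x,z)² + |∂ₓφ(t,x,z)|² + |∂_zφ(t,x,z)|² + μ φ(t,x,z)² ) dx dz. Then E_f is differentiable in t and E_f'(t) = −∫_ℝ ∂_zφ(t,x,0) · ψ(t,x,0) dx for every t. -/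

import Mathlib

open MeasureTheory Real Set

/-- The open upper half-plane `ℝ²₊ = ℝ × (0,∞)`, as a subset of `ℝ × ℝ`. -/
def upperHalfPlane2 : Set (ℝ × ℝ) := {p : ℝ × ℝ | 0 < p.2}

/-- Partial derivative in the time variable `t` of `f : (t,x,z) ↦ f(t,x,z)`. -/
noncomputable def pT (f : ℝ × ℝ × ℝ → ℝ) : ℝ × ℝ × ℝ → ℝ :=
  fun p => deriv (fun t => f (t, p.2.1, p.2.2)) p.1

/-- Partial derivative in the horizontal variable `x` of `f : (t,x,z) ↦ f(t,x,z)`. -/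
noncomputable def pX3 (f : ℝ × ℝ × ℝ → ℝ) : ℝ × ℝ × ℝ → ℝ :=
  fun p => deriv (fun x => f (p.1, x, p.2.2)) p.2.1

/-- Partial derivative in the vertical variable `z` of `f : (t,x,z) ↦ f(t,x,z)`. -/
noncomputable def pZ3 (f : ℝ × ℝ × ℝ → ℝ) : ℝ × ℝ × ℝ → ℝ :=
  fun p => deriv (fun z => f (p.1, p.2.1, z)) p.2.2

/-!
The energy density `e = ½ (ψ² + φₓ² + φ_z² + μ φ²)` obeys the local conservation law
`∂ₜ e + ∂ₓ (U e - ψ φₓ) + ∂_z (-φ_z ψ) = 0` in `z > 0`: expand `∂ₜ e`, replace `∂ₜ ψ` by the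
equation, `∂ₜ φ` by `ψ - U φₓ`, and commute the mixed second derivatives. Since everything is
compactly supported in space, `E_f` may be differentiated under the integral sign; integrating
the conservation law over the half-plane, the horizontal flux integrates to zero and the vertical
flux leaves only its boundary value at `z = 0`.
-/

section LineDeriv

variable {E : Type*} [NormedAddCommGroup E] [NormedSpace ℝ E] {f : E → ℝ}

lemma Differentiable.lineDeriv_eq_fderiv (hf : Differentiable ℝ f) (v : E) :
    (fun p => lineDeriv ℝ f p v) = fun p => fderiv ℝ f p v :=
  funext fun p => (hf p).lineDeriv_eq_fderiv

lemma ContDiff.lineDeriv {n : WithTop ℕ∞} (hf : ContDiff ℝ (n + 1) f) (v : E) :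
    ContDiff ℝ n fun p => lineDeriv ℝ f p v := by
  rw [(hf.differentiable (by simp)).lineDeriv_eq_fderiv]
  exact (hf.fderiv_right le_rfl).clm_apply contDiff_const

lemma lineDeriv_eq_zero_of_notMem_tsupport {p : E} (hp : p ∉ tsupport f) (v : E) :
    lineDeriv ℝ f p v = 0 := by
  rw [(notMem_tsupport_iff_eventuallyEq.1 hp).lineDeriv_eq]
  simp [lineDeriv]

lemma lineDeriv_lineDeriv_comm (hf : ContDiff ℝ 2 f) (p v w : E) :
    lineDeriv ℝ (fun q => lineDeriv ℝ f q v) p w = lineDeriv ℝ (fun q => lineDeriv ℝ f q w) p v := by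
  have h2 : DifferentiableAt ℝ (fderiv ℝ f) p :=
    (hf.fderiv_right (m := 1) (by norm_num)).differentiable (by simp) p
  have hsecond : ∀ u u' : E, lineDeriv ℝ (fun q => lineDeriv ℝ f q u) p u'
      = fderiv ℝ (fderiv ℝ f) p u' u := by
    intro u u'
    rw [(hf.differentiable (by simp)).lineDeriv_eq_fderiv,
      (h2.clm_apply (differentiableAt_const u)).lineDeriv_eq_fderiv,
      fderiv_clm_apply h2 (differentiableAt_const u)]
    simp
  rw [hsecond, hsecond]
  exact hf.contDiffAt.isSymmSndFDerivAt (by simp) w v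

end LineDeriv

lemma HasCompactSupport.integral_deriv_eq_zero {E : Type*} [NormedAddCommGroup E] [NormedSpace ℝ E]
    {f : ℝ → E} (hf : ContDiff ℝ 1 f) (h2f : HasCompactSupport f) : ∫ x, deriv f x = 0 :=
  integral_eq_zero_of_hasDerivAt_of_integrable (fun x => (hf.differentiable one_ne_zero x).hasDerivAt)
    ((hf.continuous_deriv le_rfl).integrable_of_hasCompactSupport h2f.deriv)
    (hf.continuous.integrable_of_hasCompactSupport h2f)

def SpatiallySupportedIn {α E : Type*} (K : Set E) (f : α × E → ℝ) : Prop :=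
  ∀ p : α × E, p.2 ∉ K → f p = 0

theorem hasDerivAt_integral_of_spatiallySupportedIn {E : Type*} [TopologicalSpace E] [T2Space E]
    [MeasurableSpace E] [OpensMeasurableSpace E] {μ : Measure E} [IsFiniteMeasureOnCompacts μ]
    {K : Set E} (hK : IsCompact K) {F F' : ℝ × E → ℝ} (hF : Continuous F) (hF' : Continuous F')
    (hFK : SpatiallySupportedIn K F) (hderiv : ∀ t q, HasDerivAt (fun τ => F (τ, q)) (F' (t, q)) t)
    (t : ℝ) : HasDerivAt (fun τ => ∫ q, F (τ, q) ∂μ) (∫ q, F' (t, q) ∂μ) t := by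
  have hF'K : SpatiallySupportedIn K F' := fun p hp => (hderiv p.1 p.2).unique <| by
    rw [show (fun τ => F (τ, p.2)) = fun _ => 0 from funext fun τ => hFK (τ, p.2) hp]
    exact hasDerivAt_const _ _
  obtain ⟨C, hC⟩ := ((isCompact_Icc (a := t - 1) (b := t + 1)).prod hK).exists_bound_of_continuousOn
    hF'.continuousOn
  have hbound : ∀ q, ∀ τ ∈ Metric.ball t 1, ‖F' (τ, q)‖ ≤ K.indicator (fun _ => C) q := by
    intro q τ hτ
    by_cases hq : q ∈ K
    · rw [Metric.mem_ball, Real.dist_eq, abs_lt] at hτ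
      rw [Set.indicator_of_mem hq]
      exact hC (τ, q) ⟨⟨by linarith, by linarith⟩, hq⟩
    · simp [Set.indicator_of_notMem hq, hF'K (τ, q) hq]
  have hbound_int : Integrable (K.indicator fun _ => C) μ :=
    (integrable_indicator_iff hK.isClosed.measurableSet).2 (integrableOn_const hK.measure_lt_top.ne)
  exact (hasDerivAt_integral_of_dominated_loc_of_deriv_le (Metric.ball_mem_nhds t one_pos)
    (.of_forall fun τ => (hF.comp (Continuous.prodMk_right τ)).aestronglyMeasurable)
    ((hF.comp (Continuous.prodMk_right t)).integrable_of_hasCompactSupport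
      (HasCompactSupport.intro hK fun q hq => hFK (t, q) hq))
    (hF'.comp (Continuous.prodMk_right t)).aestronglyMeasurable
    (.of_forall hbound) hbound_int (.of_forall fun q τ _ => hderiv τ q)).2

section PartialDerivatives

lemma pT_eq_lineDeriv (f : ℝ × ℝ × ℝ → ℝ) : pT f = fun p => lineDeriv ℝ f p (1, 0, 0) := by
  funext p
  have h : (fun s : ℝ => f (p + s • (1, 0, 0))) = fun s => f (s + p.1, p.2.1, p.2.2) := by
    funext s; congr 1; ext <;> simp [add_comm]
  rw [lineDeriv, h, deriv_comp_add_const (f := fun τ => f (τ, p.2.1, p.2.2)), zero_add]; rfl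

lemma pX3_eq_lineDeriv (f : ℝ × ℝ × ℝ → ℝ) : pX3 f = fun p => lineDeriv ℝ f p (0, 1, 0) := by
  funext p
  have h : (fun s : ℝ => f (p + s • (0, 1, 0))) = fun s => f (p.1, s + p.2.1, p.2.2) := by
    funext s; congr 1; ext <;> simp [add_comm]
  rw [lineDeriv, h, deriv_comp_add_const (f := fun x => f (p.1, x, p.2.2)), zero_add]; rfl

lemma pZ3_eq_lineDeriv (f : ℝ × ℝ × ℝ → ℝ) : pZ3 f = fun p => lineDeriv ℝ f p (0, 0, 1) := by
  funext p
  have h : (fun s : ℝ => f (p + s • (0, 0, 1))) = fun s => f (p.1, p.2.1, s + p.2.2) := by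
    funext s; congr 1; ext <;> simp [add_comm]
  rw [lineDeriv, h, deriv_comp_add_const (f := fun z => f (p.1, p.2.1, z)), zero_add]; rfl

variable {f : ℝ × ℝ × ℝ → ℝ}

lemma hasDerivAt_pT {t x z : ℝ} (hf : DifferentiableAt ℝ f (t, x, z)) :
    HasDerivAt (fun τ => f (τ, x, z)) (pT f (t, x, z)) t :=
  (hf.comp t (by fun_prop)).hasDerivAt

variable {n : WithTop ℕ∞}

lemma contDiff_pT (hf : ContDiff ℝ (n + 1) f) : ContDiff ℝ n (pT f) := by
  rw [pT_eq_lineDeriv]; exact hf.lineDeriv _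

lemma contDiff_pX3 (hf : ContDiff ℝ (n + 1) f) : ContDiff ℝ n (pX3 f) := by
  rw [pX3_eq_lineDeriv]; exact hf.lineDeriv _

lemma contDiff_pZ3 (hf : ContDiff ℝ (n + 1) f) : ContDiff ℝ n (pZ3 f) := by
  rw [pZ3_eq_lineDeriv]; exact hf.lineDeriv _

end PartialDerivatives

namespace SpatiallySupportedIn

variable {K : Set (ℝ × ℝ)} {f : ℝ × ℝ × ℝ → ℝ}

lemma lineDeriv (hK : IsClosed K) (hf : SpatiallySupportedIn K f) (v : ℝ × ℝ × ℝ) :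
    SpatiallySupportedIn K fun p => lineDeriv ℝ f p v := by
  have htsupport : tsupport f ⊆ Prod.snd ⁻¹' K :=
    closure_minimal (fun p hp => by_contra fun h => hp (hf p h)) (hK.preimage continuous_snd)
  exact fun p hp => lineDeriv_eq_zero_of_notMem_tsupport (fun h => hp (htsupport h)) v

lemma pT (hK : IsClosed K) (hf : SpatiallySupportedIn K f) : SpatiallySupportedIn K (pT f) := by
  rw [pT_eq_lineDeriv]; exact hf.lineDeriv hK _

lemma pX3 (hK : IsClosed K) (hf : SpatiallySupportedIn K f) : SpatiallySupportedIn K (pX3 f) := by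
  rw [pX3_eq_lineDeriv]; exact hf.lineDeriv hK _

lemma pZ3 (hK : IsClosed K) (hf : SpatiallySupportedIn K f) : SpatiallySupportedIn K (pZ3 f) := by
  rw [pZ3_eq_lineDeriv]; exact hf.lineDeriv hK _

lemma hasCompactSupport_sliceX (hK : IsCompact K) (hf : SpatiallySupportedIn K f) (t z : ℝ) :
    HasCompactSupport fun x => f (t, x, z) :=
  HasCompactSupport.intro (hK.image continuous_fst) fun _ hx => hf _ fun h => hx ⟨_, h, rfl⟩

lemma hasCompactSupport_sliceZ (hK : IsCompact K) (hf : SpatiallySupportedIn K f) (t x : ℝ) :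
    HasCompactSupport fun z => f (t, x, z) :=
  HasCompactSupport.intro (hK.image continuous_snd) fun _ hz => hf _ fun h => hz ⟨_, h, rfl⟩

end SpatiallySupportedIn

section HalfPlaneIntegrals

lemma volume_restrict_upperHalfPlane2 :
    volume.restrict upperHalfPlane2 = (volume : Measure ℝ).prod (volume.restrict (Ioi 0)) := by
  rw [show upperHalfPlane2 = univ ×ˢ Ioi 0 by ext; simp [upperHalfPlane2],
    Measure.volume_eq_prod, ← Measure.prod_restrict, Measure.restrict_univ]

variable {K : Set (ℝ × ℝ)} {f : ℝ × ℝ × ℝ → ℝ}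

lemma integrableOn_upperHalfPlane2 (hK : IsCompact K) (hf : Continuous f)
    (hfK : SpatiallySupportedIn K f) (t : ℝ) :
    IntegrableOn (fun q => f (t, q)) upperHalfPlane2 :=
  ((hf.comp (Continuous.prodMk_right t)).integrable_of_hasCompactSupport
    (HasCompactSupport.intro hK fun q hq => hfK (t, q) hq)).restrict

lemma setIntegral_upperHalfPlane2_pX3 (hK : IsCompact K) (hf : ContDiff ℝ 1 f)
    (hfK : SpatiallySupportedIn K f) (t : ℝ) : ∫ q in upperHalfPlane2, pX3 f (t, q) = 0 := by
  have hint := integrableOn_upperHalfPlane2 hK (contDiff_pX3 (n := 0) hf).continuous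
    (hfK.pX3 hK.isClosed) t
  rw [IntegrableOn, volume_restrict_upperHalfPlane2] at hint
  rw [volume_restrict_upperHalfPlane2, integral_prod_symm _ hint]
  have hslice : ∀ z, ∫ x, pX3 f (t, x, z) = 0 := fun z =>
    HasCompactSupport.integral_deriv_eq_zero (hf.comp (by fun_prop))
      (hfK.hasCompactSupport_sliceX hK t z)
  simp [hslice]

lemma setIntegral_upperHalfPlane2_pZ3 (hK : IsCompact K) (hf : ContDiff ℝ 1 f)
    (hfK : SpatiallySupportedIn K f) (t : ℝ) :
    ∫ q in upperHalfPlane2, pZ3 f (t, q) = -∫ x, f (t, x, 0) := by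
  have hint := integrableOn_upperHalfPlane2 hK (contDiff_pZ3 (n := 0) hf).continuous
    (hfK.pZ3 hK.isClosed) t
  rw [IntegrableOn, volume_restrict_upperHalfPlane2] at hint
  rw [volume_restrict_upperHalfPlane2, integral_prod _ hint, ← integral_neg]
  congr 1
  funext x
  exact HasCompactSupport.integral_Ioi_deriv_eq (hf.comp (by fun_prop))
    (hfK.hasCompactSupport_sliceZ hK t x) 0

end HalfPlaneIntegrals

noncomputable def energyDensity (μ : ℝ) (φ ψ : ℝ × ℝ × ℝ → ℝ) : ℝ × ℝ × ℝ → ℝ :=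
  fun p => 1 / 2 * (ψ p ^ 2 + pX3 φ p ^ 2 + pZ3 φ p ^ 2 + μ * φ p ^ 2)

noncomputable def energyFluxX (U μ : ℝ) (φ ψ : ℝ × ℝ × ℝ → ℝ) : ℝ × ℝ × ℝ → ℝ :=
  fun p => U * energyDensity μ φ ψ p - ψ p * pX3 φ p

noncomputable def energyFluxZ (φ ψ : ℝ × ℝ × ℝ → ℝ) : ℝ × ℝ × ℝ → ℝ :=
  fun p => -(pZ3 φ p * ψ p)

section Energy

variable {U μ : ℝ} {K : Set (ℝ × ℝ)} {φ ψ : ℝ × ℝ × ℝ → ℝ}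

lemma contDiff_of_convective {n : WithTop ℕ∞} (hφ : ContDiff ℝ (n + 1) φ)
    (hψ : ∀ p, ψ p = pT φ p + U * pX3 φ p) : ContDiff ℝ n ψ := by
  rw [funext hψ]; exact (contDiff_pT hφ).add (contDiff_const.mul (contDiff_pX3 hφ))

lemma spatiallySupportedIn_of_convective (hK : IsClosed K) (hφ : SpatiallySupportedIn K φ)
    (hψ : ∀ p, ψ p = pT φ p + U * pX3 φ p) : SpatiallySupportedIn K ψ := fun p hp => by
  rw [hψ, hφ.pT hK p hp, hφ.pX3 hK p hp, mul_zero, add_zero]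

lemma contDiff_energyDensity (hφ : ContDiff ℝ 2 φ) (hψ : ContDiff ℝ 1 ψ) :
    ContDiff ℝ 1 (energyDensity μ φ ψ) :=
  contDiff_const.mul ((((hψ.pow 2).add ((contDiff_pX3 (n := 1) hφ).pow 2)).add
    ((contDiff_pZ3 (n := 1) hφ).pow 2)).add (contDiff_const.mul ((hφ.of_le (by norm_num)).pow 2)))

lemma spatiallySupportedIn_energyDensity (hK : IsClosed K) (hφ : SpatiallySupportedIn K φ)
    (hψ : SpatiallySupportedIn K ψ) : SpatiallySupportedIn K (energyDensity μ φ ψ) :=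
  fun p hp => by simp [energyDensity, hφ p hp, hψ p hp, hφ.pX3 hK p hp, hφ.pZ3 hK p hp]

lemma spatiallySupportedIn_energyFluxX (hK : IsClosed K) (hφ : SpatiallySupportedIn K φ)
    (hψ : SpatiallySupportedIn K ψ) : SpatiallySupportedIn K (energyFluxX U μ φ ψ) :=
  fun p hp => by simp [energyFluxX, spatiallySupportedIn_energyDensity hK hφ hψ p hp, hψ p hp]

lemma spatiallySupportedIn_energyFluxZ (hψ : SpatiallySupportedIn K ψ) :
    SpatiallySupportedIn K (energyFluxZ φ ψ) :=
  fun p hp => by simp [energyFluxZ, hψ p hp]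

lemma lineDeriv_energyDensity (hφ : ContDiff ℝ 2 φ) (hψ : Differentiable ℝ ψ)
    (p v : ℝ × ℝ × ℝ) :
    lineDeriv ℝ (energyDensity μ φ ψ) p v
      = ψ p * lineDeriv ℝ ψ p v + pX3 φ p * lineDeriv ℝ (pX3 φ) p v
        + pZ3 φ p * lineDeriv ℝ (pZ3 φ) p v + μ * (φ p * lineDeriv ℝ φ p v) := by
  have hD : ∀ {g : ℝ × ℝ × ℝ → ℝ}, Differentiable ℝ g →
      HasLineDerivAt ℝ g (lineDeriv ℝ g p v) p v :=
    fun hg => (hg p).lineDifferentiableAt.hasLineDerivAt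
  have h : HasLineDerivAt ℝ (energyDensity μ φ ψ) _ p v :=
    ((((HasDerivAt.fun_pow (hD hψ) 2).add
      (HasDerivAt.fun_pow (hD ((contDiff_pX3 (n := 1) hφ).differentiable (by simp))) 2)).add
      (HasDerivAt.fun_pow (hD ((contDiff_pZ3 (n := 1) hφ).differentiable (by simp))) 2)).add
      ((HasDerivAt.fun_pow (hD (hφ.differentiable (by simp))) 2).const_mul μ)).const_mul (1 / 2)
  rw [h.lineDeriv]
  simp only [zero_smul, add_zero]
  ring

lemma local_energy_conservation (hφ : ContDiff ℝ 2 φ) (hψ : ∀ p, ψ p = pT φ p + U * pX3 φ p)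
    {p : ℝ × ℝ × ℝ} (hPDE : pT ψ p + U * pX3 ψ p = pX3 (pX3 φ) p + pZ3 (pZ3 φ) p - μ * φ p) :
    pT (energyDensity μ φ ψ) p + pX3 (energyFluxX U μ φ ψ) p + pZ3 (energyFluxZ φ ψ) p = 0 := by
  have hψC : ContDiff ℝ 1 ψ := contDiff_of_convective hφ hψ
  have hD : ∀ {g : ℝ × ℝ × ℝ → ℝ}, ContDiff ℝ 1 g → ∀ v,
      HasLineDerivAt ℝ g (lineDeriv ℝ g p v) p v :=
    fun hg _ => (hg.differentiable (by simp) p).lineDifferentiableAt.hasLineDerivAt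
  have he := lineDeriv_energyDensity (μ := μ) hφ (hψC.differentiable (by simp)) p
  have hFX : lineDeriv ℝ (energyFluxX U μ φ ψ) p (0, 1, 0)
      = U * lineDeriv ℝ (energyDensity μ φ ψ) p (0, 1, 0)
        - (lineDeriv ℝ ψ p (0, 1, 0) * pX3 φ p + ψ p * lineDeriv ℝ (pX3 φ) p (0, 1, 0)) := by
    have h : HasLineDerivAt ℝ (energyFluxX U μ φ ψ) _ p (0, 1, 0) :=
      ((hD (contDiff_energyDensity hφ hψC) _).const_mul U).fun_sub
        ((hD hψC _).fun_mul (hD (contDiff_pX3 (n := 1) hφ) _))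
    rw [h.lineDeriv]
    simp only [zero_smul, add_zero]
  have hFZ : lineDeriv ℝ (energyFluxZ φ ψ) p (0, 0, 1)
      = -(lineDeriv ℝ (pZ3 φ) p (0, 0, 1) * ψ p + pZ3 φ p * lineDeriv ℝ ψ p (0, 0, 1)) := by
    have h : HasLineDerivAt ℝ (energyFluxZ φ ψ) _ p (0, 0, 1) :=
      ((hD (contDiff_pZ3 (n := 1) hφ) _).fun_mul (hD hψC _)).fun_neg
    rw [h.lineDeriv]
    simp only [zero_smul, add_zero]
  have hDψ : ∀ v, lineDeriv ℝ ψ p v = lineDeriv ℝ (pT φ) p v + U * lineDeriv ℝ (pX3 φ) p v := by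
    intro v
    have h : HasLineDerivAt ℝ (fun q => pT φ q + U * pX3 φ q) _ p v :=
      (hD (contDiff_pT (n := 1) hφ) v).fun_add ((hD (contDiff_pX3 (n := 1) hφ) v).const_mul U)
    rw [funext hψ, h.lineDeriv]
  have hTX := lineDeriv_lineDeriv_comm hφ p (0, 1, 0) (1, 0, 0)
  have hTZ := lineDeriv_lineDeriv_comm hφ p (0, 0, 1) (1, 0, 0)
  have hXZ := lineDeriv_lineDeriv_comm hφ p (0, 0, 1) (0, 1, 0)
  have hψp := hψ p
  simp only [pT_eq_lineDeriv, pX3_eq_lineDeriv, pZ3_eq_lineDeriv]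
  rw [hFX, hFZ, he, he]
  simp only [pT_eq_lineDeriv, pX3_eq_lineDeriv, pZ3_eq_lineDeriv] at hPDE hψp hDψ ⊢
  linear_combination ψ p * hPDE - μ * φ p * hψp
    + lineDeriv ℝ φ p (0, 1, 0) * (hTX - hDψ (0, 1, 0))
    + lineDeriv ℝ φ p (0, 0, 1) * (hTZ + U * hXZ - hDψ (0, 0, 1))

lemma hasDerivAt_setIntegral_energyDensity (hK : IsCompact K) (hφ : ContDiff ℝ 2 φ)
    (hψ : ContDiff ℝ 1 ψ) (hφK : SpatiallySupportedIn K φ) (hψK : SpatiallySupportedIn K ψ)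
    (t : ℝ) :
    HasDerivAt (fun τ => ∫ q in upperHalfPlane2, energyDensity μ φ ψ (τ, q))
      (∫ q in upperHalfPlane2, pT (energyDensity μ φ ψ) (t, q)) t := by
  have he : ContDiff ℝ 1 (energyDensity μ φ ψ) := contDiff_energyDensity hφ hψ
  exact hasDerivAt_integral_of_spatiallySupportedIn hK he.continuous
    (contDiff_pT (n := 0) he).continuous (spatiallySupportedIn_energyDensity hK.isClosed hφK hψK)
    (fun _ _ => hasDerivAt_pT (he.differentiable one_ne_zero _)) t

lemma setIntegral_pT_energyDensity (hK : IsCompact K) (hφ : ContDiff ℝ 2 φ)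
    (hφK : SpatiallySupportedIn K φ) (hψ : ∀ p, ψ p = pT φ p + U * pX3 φ p) (t : ℝ)
    (hPDE : ∀ x z : ℝ, 0 < z →
      pT ψ (t, x, z) + U * pX3 ψ (t, x, z)
        = pX3 (pX3 φ) (t, x, z) + pZ3 (pZ3 φ) (t, x, z) - μ * φ (t, x, z)) :
    ∫ q in upperHalfPlane2, pT (energyDensity μ φ ψ) (t, q)
      = -∫ x, pZ3 φ (t, x, 0) * ψ (t, x, 0) := by
  have hψC : ContDiff ℝ 1 ψ := contDiff_of_convective hφ hψ
  have hψK := spatiallySupportedIn_of_convective hK.isClosed hφK hψ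
  have hFX := spatiallySupportedIn_energyFluxX (U := U) (μ := μ) hK.isClosed hφK hψK
  have hFZ := spatiallySupportedIn_energyFluxZ (φ := φ) hψK
  have hFXC : ContDiff ℝ 1 (energyFluxX U μ φ ψ) :=
    (contDiff_const.mul (contDiff_energyDensity hφ hψC)).sub (hψC.mul (contDiff_pX3 hφ))
  have hFZC : ContDiff ℝ 1 (energyFluxZ φ ψ) := ((contDiff_pZ3 hφ).mul hψC).neg
  calc ∫ q in upperHalfPlane2, pT (energyDensity μ φ ψ) (t, q)
      = ∫ q in upperHalfPlane2,
          -(pX3 (energyFluxX U μ φ ψ) (t, q) + pZ3 (energyFluxZ φ ψ) (t, q)) :=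
        setIntegral_congr_fun (measurableSet_lt measurable_const measurable_snd) fun q hq => by
          linarith [local_energy_conservation hφ hψ (hPDE q.1 q.2 hq)]
    _ = -((∫ q in upperHalfPlane2, pX3 (energyFluxX U μ φ ψ) (t, q))
          + ∫ q in upperHalfPlane2, pZ3 (energyFluxZ φ ψ) (t, q)) := by
        rw [integral_neg, integral_add
          (integrableOn_upperHalfPlane2 hK (contDiff_pX3 (n := 0) hFXC).continuous
            (hFX.pX3 hK.isClosed) t)
          (integrableOn_upperHalfPlane2 hK (contDiff_pZ3 (n := 0) hFZC).continuous
            (hFZ.pZ3 hK.isClosed) t)]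
    _ = -∫ x, pZ3 φ (t, x, 0) * ψ (t, x, 0) := by
        rw [setIntegral_upperHalfPlane2_pX3 hK hFXC hFX, setIntegral_upperHalfPlane2_pZ3 hK hFZC hFZ]
        simp [energyFluxZ, integral_neg]

end Energy

theorem statement7_general
    (U μ : ℝ)
    (φ : ℝ × ℝ × ℝ → ℝ) (hφ : ContDiff ℝ 2 φ)
    (K : Set (ℝ × ℝ)) (hK : IsCompact K)
    (hsupp : ∀ t x z : ℝ, (x, z) ∉ K → φ (t, x, z) = 0)
    (ψ : ℝ × ℝ × ℝ → ℝ) (hψ : ∀ p, ψ p = pT φ p + U * pX3 φ p)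
    (hPDE : ∀ t x z : ℝ, 0 < z →
      pT ψ (t, x, z) + U * pX3 ψ (t, x, z)
        = pX3 (pX3 φ) (t, x, z) + pZ3 (pZ3 φ) (t, x, z) - μ * φ (t, x, z))
    (Ef : ℝ → ℝ)
    (hEf : ∀ t : ℝ, Ef t = (1 / 2) * ∫ q in upperHalfPlane2,
      ((ψ (t, q.1, q.2)) ^ 2 + (pX3 φ (t, q.1, q.2)) ^ 2
        + (pZ3 φ (t, q.1, q.2)) ^ 2 + μ * (φ (t, q.1, q.2)) ^ 2)) :
    ∀ t : ℝ, HasDerivAt Ef (-(∫ x : ℝ, pZ3 φ (t, x, 0) * ψ (t, x, 0))) t := by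
  intro t
  have hφK : SpatiallySupportedIn K φ := fun p => hsupp p.1 p.2.1 p.2.2
  have hEf_eq : Ef = fun τ => ∫ q in upperHalfPlane2, energyDensity μ φ ψ (τ, q) := by
    funext τ; rw [hEf τ, ← integral_const_mul]; rfl
  rw [hEf_eq, ← setIntegral_pT_energyDensity hK hφ hφK hψ t (hPDE t)]
  exact hasDerivAt_setIntegral_energyDensity hK hφ (contDiff_of_convective hφ hψ) hφK
    (spatiallySupportedIn_of_convective hK.isClosed hφK hψ) t

/-- Let `U ∈ ℝ`, `μ ≥ 0`, and let `φ = φ(t,x,z)` be a twice continuously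
differentiable, spatially compactly supported solution of the convected wave equation
`(∂_t + U∂ₓ)²φ = Δφ − μφ` on the half-plane `z > 0`.  With `ψ = ∂_tφ + U∂ₓφ` and the
flow energy `E_f(t) = ½ ∫_{ℝ×(0,∞)} (ψ² + |∂ₓφ|² + |∂_zφ|² + μφ²)`, the energy `E_f` is
differentiable and `E_f'(t) = −∫_ℝ ∂_zφ(t,x,0)·ψ(t,x,0) dx` for every `t`. -/
theorem statement7
    (U μ : ℝ) (hμ : 0 ≤ μ)
    (φ : ℝ × ℝ × ℝ → ℝ) (hφ : ContDiff ℝ 2 φ)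
    (K : Set (ℝ × ℝ)) (hK : IsCompact K)
    (hsupp : ∀ t x z : ℝ, (x, z) ∉ K → φ (t, x, z) = 0)
    (ψ : ℝ × ℝ × ℝ → ℝ) (hψ : ∀ p, ψ p = pT φ p + U * pX3 φ p)
    (hPDE : ∀ t x z : ℝ, 0 < z →
      pT ψ (t, x, z) + U * pX3 ψ (t, x, z)
        = pX3 (pX3 φ) (t, x, z) + pZ3 (pZ3 φ) (t, x, z) - μ * φ (t, x, z))
    (Ef : ℝ → ℝ)
    (hEf : ∀ t : ℝ, Ef t = (1 / 2) * ∫ q in upperHalfPlane2,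
      ((ψ (t, q.1, q.2)) ^ 2 + (pX3 φ (t, q.1, q.2)) ^ 2
        + (pZ3 φ (t, q.1, q.2)) ^ 2 + μ * (φ (t, q.1, q.2)) ^ 2)) :
    ∀ t : ℝ, HasDerivAt Ef (-(∫ x : ℝ, pZ3 φ (t, x, 0) * ψ (t, x, 0))) t :=
  statement7_general U μ φ hφ K hK hsupp ψ hψ hPDE Ef hEf
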